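/- For every real X > 0 there exists a unique m > 0 such that 9·ρ₊(m)² = 1/X. -/
import Mathlib

private lemma cube_add_mono : StrictMono (fun x : ℝ => x ^ 3 + x) :=
  (Odd.strictMono_pow ⟨1, by norm_num⟩ |>.add strictMono_id)

/-- For every real `X > 0` there exists a unique `m > 0` such that
`9·ρ₊(m)² = 1/X`, where `ρ₊(m)` is the unique positive root of `ρ³ + ρ − 2m`. -/
theorem unique_mass_parameter (ρplus : ℝ → ℝ)
    (hρ : ∀ m : ℝ, 0 < m → 0 < ρplus m ∧ (ρplus m) ^ 3 + ρplus m - 2 * m = 0) :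
    ∀ X : ℝ, 0 < X → ∃! m : ℝ, 0 < m ∧ 9 * (ρplus m) ^ 2 = 1 / X := by
  intro X hX
  set r : ℝ := Real.sqrt (1 / (9 * X)) with hr
  have hrpos : 0 < r := Real.sqrt_pos.mpr (by positivity)
  have hr2 : r ^ 2 = 1 / (9 * X) := Real.sq_sqrt (by positivity)
  set m : ℝ := (r ^ 3 + r) / 2 with hm
  have hmpos : 0 < m := by positivity
  obtain ⟨hp, he⟩ := hρ m hmpos
  have heq : (ρplus m) ^ 3 + ρplus m = r ^ 3 + r := by
    have : 2 * m = r ^ 3 + r := by rw [hm]; ring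
    linarith
  have hpr : ρplus m = r := cube_add_mono.injective heq
  refine ⟨m, ⟨hmpos, by rw [hpr]; rw [hr2]; field_simp⟩, ?_⟩
  rintro m' ⟨hm'pos, hm'eq⟩
  obtain ⟨hp', he'⟩ := hρ m' hm'pos
  have hsq : (ρplus m') ^ 2 = (ρplus m) ^ 2 := by
    rw [hpr, hr2]
    field_simp at hm'eq ⊢
    linarith
  have : ρplus m' = ρplus m := by nlinarith
  nlinarith [he, he', this]
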